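/- arXiv:2108.00393 — 3 statements merged into one kernel-verified Lean document; each statement's English description precedes it below -/
import Mathlib

section
/- Let F : ℝ^d → ℝ satisfy Assumption (A) with constants L, C_u, C_l, M, and let α > 0. Then there exist constants b₁, b₂ > 0, depending only on α, M, C_u and C_l, such that for every Borel probability measure μ on ℝ^d with finite second moment, |X^α(μ)|² ≤ b₁ + b₂ ∫_{ℝ^d} |x|² μ(dx). -/
open MeasureTheory Filter

/-!
Subtracting `inf F` does not change `X^α`, so we may take `F ≥ 0`, and then the Gibbs weight
`w = e^{-αF}` lies in `(0, 1]`. By Cauchy–Schwarz, `|X^α(μ)|² ≤ ∫ w |x|² dμ / ∫ w dμ`. With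
`m = ∫ |x|² dμ` and `a = C_u (1 + m)`, Jensen's inequality and the quadratic upper bound on `F`
give `∫ w dμ ≥ e^{-α a}`, while the quadratic lower bound `|x|² ≤ M² + F(x) / C_l` together with
`t e^{-αt} ≤ a e^{-αt} + e^{-αa} / (α e)` gives
`∫ w |x|² dμ ≤ (M² + a / C_l) ∫ w dμ + e^{-αa} / (α e C_l)`.
-/

/-- Assumption (A) on the cost function `F` with constants `L, Cu, Cl, M`. -/
def AssumptionA {d : ℕ} (F : EuclideanSpace ℝ (Fin d) → ℝ) (L Cu Cl M : ℝ) : Prop :=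
  (∀ x y, |F x - F y| ≤ L * (‖x‖ + ‖y‖) * ‖x - y‖) ∧
  BddBelow (Set.range F) ∧
  (∀ x, F x - sInf (Set.range F) ≤ Cu * (1 + ‖x‖ ^ 2)) ∧
  (∀ x, M ≤ ‖x‖ → Cl * ‖x‖ ^ 2 ≤ F x - sInf (Set.range F))

/-- The regularized global best `X^α(μ) = (∫ x e^{-αF(x)} dμ)/(∫ e^{-αF(x)} dμ)`. -/
noncomputable def Xalpha {d : ℕ} (α : ℝ) (F : EuclideanSpace ℝ (Fin d) → ℝ)
    (μ : Measure (EuclideanSpace ℝ (Fin d))) : EuclideanSpace ℝ (Fin d) :=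
  (∫ x, Real.exp (-α * F x) ∂μ)⁻¹ • ∫ x, Real.exp (-α * F x) • x ∂μ

open Real Set Topology

lemma continuous_of_abs_sub_le {E : Type*} [SeminormedAddCommGroup E] {F : E → ℝ} {L : ℝ}
    (hF : ∀ x y, |F x - F y| ≤ L * (‖x‖ + ‖y‖) * ‖x - y‖) : Continuous F := by
  refine continuous_iff_continuousAt.2 fun x₀ => tendsto_iff_dist_tendsto_zero.2 ?_
  have hbound : Tendsto (fun x => L * (‖x‖ + ‖x₀‖) * ‖x - x₀‖) (𝓝 x₀) (𝓝 0) := by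
    simpa using (by fun_prop : Continuous fun x => L * (‖x‖ + ‖x₀‖) * ‖x - x₀‖).tendsto x₀
  exact squeeze_zero (fun _ => dist_nonneg) (fun x => (hF x x₀).trans_eq' (dist_eq _ _)) hbound

lemma mul_exp_neg_mul_le_add {α : ℝ} (hα : 0 < α) (a t : ℝ) :
    t * exp (-α * t) ≤ a * exp (-α * t) + exp (-1) / α * exp (-α * a) := by
  have hsplit : exp (-α * t) = exp (-(α * (t - a))) * exp (-α * a) := by
    rw [← exp_add]; ring_nf
  calc t * exp (-α * t)
      = a * exp (-α * t) + α * (t - a) * exp (-(α * (t - a))) / α * exp (-α * a) := by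
        rw [hsplit]; field_simp; ring
    _ ≤ a * exp (-α * t) + exp (-1) / α * exp (-α * a) := by
        gcongr; exact mul_exp_neg_le_exp_neg_one _

lemma exp_neg_mul_le_one {α g : ℝ} (hα : 0 ≤ α) (hg : 0 ≤ g) : exp (-α * g) ≤ 1 :=
  exp_le_one_iff.2 (by nlinarith)

lemma exp_integral_le_integral_exp {Ω : Type*} [MeasurableSpace Ω] {μ : Measure Ω}
    [IsProbabilityMeasure μ] {h : Ω → ℝ} (hh : Integrable h μ)
    (hexp : Integrable (fun x => exp (h x)) μ) : exp (∫ x, h x ∂μ) ≤ ∫ x, exp (h x) ∂μ :=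
  convexOn_exp.map_integral_le continuous_exp.continuousOn isClosed_univ
    (ae_of_all _ fun _ => mem_univ _) hh hexp

lemma integrable_exp_neg_mul {Ω : Type*} [MeasurableSpace Ω] {μ : Measure Ω} [IsFiniteMeasure μ]
    {G : Ω → ℝ} {α : ℝ} (hα : 0 ≤ α) (hG : Measurable G) (hG0 : ∀ x, 0 ≤ G x) :
    Integrable (fun x => exp (-α * G x)) μ :=
  .of_bound (by fun_prop) 1 (ae_of_all _ fun x => by
    rw [norm_of_nonneg (exp_pos _).le]; exact exp_neg_mul_le_one hα (hG0 x))

section CauchySchwarz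

variable {Ω : Type*} [MeasurableSpace Ω] {μ : Measure Ω} {w : Ω → ℝ}

lemma sq_integral_mul_le {g : Ω → ℝ} (hw : ∀ x, 0 ≤ w x) (hg : ∀ x, 0 ≤ g x)
    (hgm : AEStronglyMeasurable g μ) (hwi : Integrable w μ)
    (hwg : Integrable (fun x => w x * g x ^ 2) μ) :
    (∫ x, w x * g x ∂μ) ^ 2 ≤ (∫ x, w x ∂μ) * ∫ x, w x * g x ^ 2 ∂μ := by
  have hsqrt : AEStronglyMeasurable (fun x => √(w x)) μ :=
    continuous_sqrt.comp_aestronglyMeasurable hwi.aestronglyMeasurable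
  have hf₁ : MemLp (fun x => √(w x)) (ENNReal.ofReal 2) μ := by
    rw [ENNReal.ofReal_ofNat, memLp_two_iff_integrable_sq hsqrt]
    exact hwi.congr (ae_of_all _ fun x => (sq_sqrt (hw x)).symm)
  have hf₂ : MemLp (fun x => √(w x) * g x) (ENNReal.ofReal 2) μ := by
    rw [ENNReal.ofReal_ofNat,
      memLp_two_iff_integrable_sq (f := fun x => √(w x) * g x) (hsqrt.mul hgm)]
    exact hwg.congr (ae_of_all _ fun x => by simp only [mul_pow, sq_sqrt (hw x)])
  have holder := integral_mul_le_Lp_mul_Lq_of_nonneg Real.HolderConjugate.two_two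
    (ae_of_all _ fun x => sqrt_nonneg (w x))
    (ae_of_all _ fun x => mul_nonneg (sqrt_nonneg (w x)) (hg x)) hf₁ hf₂
  simp only [← mul_assoc, mul_self_sqrt (hw _), rpow_two, mul_pow, sq_sqrt (hw _),
    ← sqrt_eq_rpow] at holder
  calc (∫ x, w x * g x ∂μ) ^ 2
      ≤ (√(∫ x, w x ∂μ) * √(∫ x, w x * g x ^ 2 ∂μ)) ^ 2 :=
        pow_le_pow_left₀ (integral_nonneg fun x => mul_nonneg (hw x) (hg x)) holder 2
    _ = (∫ x, w x ∂μ) * ∫ x, w x * g x ^ 2 ∂μ := by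
        rw [mul_pow, sq_sqrt (integral_nonneg hw),
          sq_sqrt (integral_nonneg fun x => mul_nonneg (hw x) (sq_nonneg _))]

lemma norm_integral_smul_sq_le {E : Type*} [NormedAddCommGroup E] [NormedSpace ℝ E]
    {f : Ω → E} (hw : ∀ x, 0 ≤ w x) (hf : AEStronglyMeasurable f μ) (hwi : Integrable w μ)
    (hwf : Integrable (fun x => w x * ‖f x‖ ^ 2) μ) :
    ‖∫ x, w x • f x ∂μ‖ ^ 2 ≤ (∫ x, w x ∂μ) * ∫ x, w x * ‖f x‖ ^ 2 ∂μ := by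
  have hnorm : ‖∫ x, w x • f x ∂μ‖ ≤ ∫ x, w x * ‖f x‖ ∂μ := by
    refine (norm_integral_le_integral_norm _).trans_eq (integral_congr_ae (ae_of_all _ fun x => ?_))
    simp only [norm_smul, norm_of_nonneg (hw x)]
  exact (pow_le_pow_left₀ (norm_nonneg _) hnorm 2).trans
    (sq_integral_mul_le hw (fun x => norm_nonneg _) hf.norm hwi hwf)

end CauchySchwarz

lemma Xalpha_sub_const {d : ℕ} (α c : ℝ) (F : EuclideanSpace ℝ (Fin d) → ℝ)
    (μ : Measure (EuclideanSpace ℝ (Fin d))) :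
    Xalpha α (fun x => F x - c) μ = Xalpha α F μ := by
  have hshift : ∀ x, exp (-α * (F x - c)) = exp (α * c) * exp (-α * F x) := fun x => by
    rw [← exp_add]; ring_nf
  simp only [Xalpha, hshift, mul_smul, integral_const_mul, integral_smul]
  rw [smul_smul, mul_inv_rev, inv_mul_cancel_right₀ (exp_ne_zero _)]

section GibbsWeight

variable {E : Type*} [NormedAddCommGroup E] [MeasurableSpace E] [BorelSpace E]
  {μ : Measure E} {G : E → ℝ} {α Cu Cl M : ℝ}

lemma integrable_exp_neg_mul_mul_sq_norm (hα : 0 ≤ α) (hG : Measurable G) (hG0 : ∀ x, 0 ≤ G x)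
    (h2 : Integrable (fun x => ‖x‖ ^ 2) μ) :
    Integrable (fun x => exp (-α * G x) * ‖x‖ ^ 2) μ :=
  h2.mono' (by fun_prop) (ae_of_all _ fun x => by
    rw [norm_of_nonneg (by positivity)]
    exact mul_le_of_le_one_left (sq_nonneg _) (exp_neg_mul_le_one hα (hG0 x)))

variable [IsProbabilityMeasure μ]

lemma exp_neg_mul_le_integral_exp_neg_mul (hα : 0 ≤ α) (hG : Measurable G)
    (hG0 : ∀ x, 0 ≤ G x) (hup : ∀ x, G x ≤ Cu * (1 + ‖x‖ ^ 2))
    (h2 : Integrable (fun x => ‖x‖ ^ 2) μ) :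
    exp (-α * (Cu * (1 + ∫ x, ‖x‖ ^ 2 ∂μ))) ≤ ∫ x, exp (-α * G x) ∂μ := by
  have hmono : ∀ x, exp (-α * (Cu * (1 + ‖x‖ ^ 2))) ≤ exp (-α * G x) := fun x =>
    exp_le_exp.2 (by nlinarith [hup x])
  have hint : Integrable (fun x => exp (-α * (Cu * (1 + ‖x‖ ^ 2)))) μ :=
    (integrable_exp_neg_mul hα hG hG0).mono' (by fun_prop)
      (ae_of_all _ fun x => (norm_of_nonneg (exp_pos _).le).trans_le (hmono x))
  calc exp (-α * (Cu * (1 + ∫ x, ‖x‖ ^ 2 ∂μ)))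
      = exp (∫ x, -α * (Cu * (1 + ‖x‖ ^ 2)) ∂μ) := by
        rw [integral_const_mul, integral_const_mul, integral_add (integrable_const 1) h2]
        simp
    _ ≤ ∫ x, exp (-α * (Cu * (1 + ‖x‖ ^ 2))) ∂μ :=
        exp_integral_le_integral_exp (((integrable_const 1).add h2).const_mul _ |>.const_mul _)
          hint
    _ ≤ ∫ x, exp (-α * G x) ∂μ := integral_mono hint (integrable_exp_neg_mul hα hG hG0) hmono

lemma integral_exp_neg_mul_mul_sq_norm_le (hα : 0 < α) (hCl : 0 < Cl) (hG : Measurable G)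
    (hG0 : ∀ x, 0 ≤ G x) (hup : ∀ x, G x ≤ Cu * (1 + ‖x‖ ^ 2))
    (hlow : ∀ x, M ≤ ‖x‖ → Cl * ‖x‖ ^ 2 ≤ G x) (h2 : Integrable (fun x => ‖x‖ ^ 2) μ) :
    ∫ x, exp (-α * G x) * ‖x‖ ^ 2 ∂μ ≤
      (M ^ 2 + Cu / Cl + exp (-1) / (α * Cl) + Cu / Cl * ∫ x, ‖x‖ ^ 2 ∂μ) *
        ∫ x, exp (-α * G x) ∂μ := by
  set a := Cu * (1 + ∫ x, ‖x‖ ^ 2 ∂μ)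
  set Z := ∫ x, exp (-α * G x) ∂μ
  have hpointwise : ∀ x, exp (-α * G x) * ‖x‖ ^ 2 ≤
      (M ^ 2 + a / Cl) * exp (-α * G x) + exp (-1) / (α * Cl) * exp (-α * a) := by
    intro x
    have hsq : ‖x‖ ^ 2 ≤ M ^ 2 + G x / Cl := by
      rcases le_total ‖x‖ M with hxM | hMx
      · have := div_nonneg (hG0 x) hCl.le
        nlinarith [pow_le_pow_left₀ (norm_nonneg x) hxM 2]
      · nlinarith [(le_div_iff₀' hCl).2 (hlow x hMx), sq_nonneg M]
    have hgibbs := mul_exp_neg_mul_le_add hα a (G x)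
    calc exp (-α * G x) * ‖x‖ ^ 2 ≤ exp (-α * G x) * (M ^ 2 + G x / Cl) := by gcongr
      _ = M ^ 2 * exp (-α * G x) + G x * exp (-α * G x) / Cl := by ring
      _ ≤ M ^ 2 * exp (-α * G x) +
            (a * exp (-α * G x) + exp (-1) / α * exp (-α * a)) / Cl := by gcongr
      _ = _ := by field_simp; ring
  have hZ := exp_neg_mul_le_integral_exp_neg_mul hα.le hG hG0 hup h2
  calc ∫ x, exp (-α * G x) * ‖x‖ ^ 2 ∂μ
      ≤ ∫ x, (M ^ 2 + a / Cl) * exp (-α * G x) + exp (-1) / (α * Cl) * exp (-α * a) ∂μ :=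
        integral_mono (integrable_exp_neg_mul_mul_sq_norm hα.le hG hG0 h2)
          (((integrable_exp_neg_mul hα.le hG hG0).const_mul _).add (integrable_const _)) hpointwise
    _ = (M ^ 2 + a / Cl) * Z + exp (-1) / (α * Cl) * exp (-α * a) := by
        rw [integral_add ((integrable_exp_neg_mul hα.le hG hG0).const_mul _) (integrable_const _),
          integral_const_mul, integral_const, probReal_univ, one_smul]
    _ ≤ (M ^ 2 + a / Cl) * Z + exp (-1) / (α * Cl) * Z := by gcongr
    _ = _ := by ring

end GibbsWeight

theorem norm_Xalpha_sq_le {d : ℕ} {μ : Measure (EuclideanSpace ℝ (Fin d))}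
    [IsProbabilityMeasure μ] {G : EuclideanSpace ℝ (Fin d) → ℝ} {α Cu Cl M : ℝ}
    (hα : 0 < α) (hCl : 0 < Cl) (hG : Measurable G) (hG0 : ∀ x, 0 ≤ G x)
    (hup : ∀ x, G x ≤ Cu * (1 + ‖x‖ ^ 2)) (hlow : ∀ x, M ≤ ‖x‖ → Cl * ‖x‖ ^ 2 ≤ G x)
    (h2 : Integrable (fun x => ‖x‖ ^ 2) μ) :
    ‖Xalpha α G μ‖ ^ 2 ≤ M ^ 2 + Cu / Cl + exp (-1) / (α * Cl) + Cu / Cl * ∫ x, ‖x‖ ^ 2 ∂μ := by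
  set Z := ∫ x, exp (-α * G x) ∂μ
  have hZ : 0 < Z := (exp_pos _).trans_le (exp_neg_mul_le_integral_exp_neg_mul hα.le hG hG0 hup h2)
  have hCS : ‖∫ x, exp (-α * G x) • x ∂μ‖ ^ 2 ≤ Z * ∫ x, exp (-α * G x) * ‖x‖ ^ 2 ∂μ :=
    norm_integral_smul_sq_le (fun x => (exp_pos _).le) aestronglyMeasurable_id
      (integrable_exp_neg_mul hα.le hG hG0) (integrable_exp_neg_mul_mul_sq_norm hα.le hG hG0 h2)
  calc ‖Xalpha α G μ‖ ^ 2 = ‖∫ x, exp (-α * G x) • x ∂μ‖ ^ 2 / Z ^ 2 := by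
        rw [Xalpha, norm_smul, mul_pow, norm_inv, norm_of_nonneg hZ.le, inv_pow, inv_mul_eq_div]
    _ ≤ Z * (∫ x, exp (-α * G x) * ‖x‖ ^ 2 ∂μ) / Z ^ 2 := by gcongr
    _ = (∫ x, exp (-α * G x) * ‖x‖ ^ 2 ∂μ) / Z := by field_simp
    _ ≤ _ := (div_le_iff₀ hZ).2 (integral_exp_neg_mul_mul_sq_norm_le hα hCl hG hG0 hup hlow h2)

theorem Xalpha_sq_bound_general (d : ℕ) (α M Cu Cl : ℝ)
    (hα : 0 < α) (hCu : 0 < Cu) (hCl : 0 < Cl) :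
    ∃ b₁ b₂ : ℝ, 0 < b₁ ∧ 0 < b₂ ∧
      ∀ (L : ℝ) (F : EuclideanSpace ℝ (Fin d) → ℝ), 0 < L → AssumptionA F L Cu Cl M →
        ∀ (μ : Measure (EuclideanSpace ℝ (Fin d))), IsProbabilityMeasure μ →
          Integrable (fun x => ‖x‖ ^ 2) μ →
          ‖Xalpha α F μ‖ ^ 2 ≤ b₁ + b₂ * ∫ x, ‖x‖ ^ 2 ∂μ := by
  refine ⟨M ^ 2 + Cu / Cl + exp (-1) / (α * Cl), Cu / Cl, by positivity, by positivity, ?_⟩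
  rintro L F - ⟨hlip, hbdd, hup, hlow⟩ μ hμ h2
  rw [← Xalpha_sub_const α (sInf (range F))]
  exact norm_Xalpha_sq_le hα hCl ((continuous_of_abs_sub_le hlip).measurable.sub_const _)
    (fun x => sub_nonneg.2 (csInf_le hbdd ⟨x, rfl⟩)) hup hlow h2

/-- Quadratic bound on the regularized global best: there exist constants `b₁, b₂ > 0`
depending only on `α, M, Cu, Cl` such that `|X^α(μ)|² ≤ b₁ + b₂ ∫ |x|² dμ` for every Borel
probability measure `μ` with finite second moment, for every `F` satisfying Assumption (A). -/
theorem Xalpha_sq_bound (d : ℕ) (α M Cu Cl : ℝ)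
    (hα : 0 < α) (hM : 0 < M) (hCu : 0 < Cu) (hCl : 0 < Cl) :
    ∃ b₁ b₂ : ℝ, 0 < b₁ ∧ 0 < b₂ ∧
      ∀ (L : ℝ) (F : EuclideanSpace ℝ (Fin d) → ℝ), 0 < L → AssumptionA F L Cu Cl M →
        ∀ (μ : Measure (EuclideanSpace ℝ (Fin d))), IsProbabilityMeasure μ →
          Integrable (fun x => ‖x‖ ^ 2) μ →
          ‖Xalpha α F μ‖ ^ 2 ≤ b₁ + b₂ * ∫ x, ‖x‖ ^ 2 ∂μ :=
  Xalpha_sq_bound_general d α M Cu Cl hα hCu hCl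
end

section
/- Let F : ℝ^d → ℝ be Borel measurable and bounded from below with F̲ := inf F, let α > 0, and let ρ be a Borel probability measure on ℝ^d with finite second moment. Then ∫_{ℝ^d} |x − X^α(ρ)|² ρ(dx) ≤ ( ∫_{ℝ^d} ∫_{ℝ^d} |x − y|² e^{−αF(y)} ρ(dy) ρ(dx) ) / ( ∫_{ℝ^d} e^{−αF(y)} ρ(dy) ) ≤ 2 e^{−αF̲} · ( ∫_{ℝ^d} |x − m_ρ|² ρ(dx) ) / ( ∫_{ℝ^d} e^{−αF(y)} ρ(dy) ), where m_ρ := ∫_{ℝ^d} x ρ(dx) is the mean of ρ. -/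
open MeasureTheory Filter

/-!
With `w = e^{-αF}`, the point `X^α(ρ)` is the mean of the finite measure `w ρ`. The parallel-axis
identity `∫ ‖x - y‖² dν = ν(E) ‖x - mean ν‖² + ∫ ‖y - mean ν‖² dν`, applied to `ν = w ρ`, gives
`(∫ w dρ) ‖x - X^α(ρ)‖² ≤ ∫ ‖x - y‖² w(y) dρ(y)` for every `x`, and integrating in `x` gives the
first inequality. For the second, bound `w ≤ e^{-α inf F}` and apply the same identity to `ρ`:
`∫ ‖x - y‖² dρ(y) = ‖x - m_ρ‖² + Var ρ`, whose `ρ`-integral is `2 Var ρ`.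
-/

open Set

section WithDensity

variable {α E : Type*} [MeasurableSpace α] [NormedAddCommGroup E] [NormedSpace ℝ E]
  {μ : Measure α} {w : α → ℝ}

lemma integral_withDensity_ofReal (hw : Measurable w) (hw0 : ∀ x, 0 ≤ w x) (g : α → E) :
    ∫ x, g x ∂μ.withDensity (fun x => ENNReal.ofReal (w x)) = ∫ x, w x • g x ∂μ := by
  rw [integral_withDensity_eq_integral_toReal_smul hw.ennreal_ofReal
    (ae_of_all _ fun _ => ENNReal.ofReal_lt_top)]
  simp_rw [ENNReal.toReal_ofReal (hw0 _)]

lemma integrable_withDensity_ofReal_iff (hw : Measurable w) (hw0 : ∀ x, 0 ≤ w x) {g : α → E} :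
    Integrable g (μ.withDensity fun x => ENNReal.ofReal (w x)) ↔
      Integrable (fun x => w x • g x) μ := by
  rw [integrable_withDensity_iff_integrable_smul' hw.ennreal_ofReal
    (ae_of_all _ fun _ => ENNReal.ofReal_lt_top)]
  simp_rw [ENNReal.toReal_ofReal (hw0 _)]

end WithDensity

section SecondMoment

variable {E : Type*} [NormedAddCommGroup E] [MeasurableSpace E] [BorelSpace E]
  [SecondCountableTopology E] {μ : Measure E}

lemma memLp_two_id_of_integrable_sq_norm (hμ : Integrable (fun y : E => ‖y‖ ^ 2) μ) :
    MemLp id 2 μ :=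
  (memLp_two_iff_integrable_sq_norm aestronglyMeasurable_id).2 hμ

variable [IsFiniteMeasure μ]

lemma integrable_sq_norm_sub_const (hμ : Integrable (fun y : E => ‖y‖ ^ 2) μ) (c : E) :
    Integrable (fun y => ‖y - c‖ ^ 2) μ :=
  (memLp_two_iff_integrable_sq_norm (aestronglyMeasurable_id.sub aestronglyMeasurable_const)).1
    ((memLp_two_id_of_integrable_sq_norm hμ).sub (memLp_const c))

lemma integrable_sq_norm_const_sub (hμ : Integrable (fun y : E => ‖y‖ ^ 2) μ) (c : E) :
    Integrable (fun y => ‖c - y‖ ^ 2) μ := by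
  simpa only [norm_sub_rev] using integrable_sq_norm_sub_const hμ c

lemma integrable_sq_norm_const_sub_mul {w : E → ℝ} {C : ℝ}
    (hμ : Integrable (fun y : E => ‖y‖ ^ 2) μ) (hw : Measurable w) (hw0 : ∀ y, 0 ≤ w y)
    (hwC : ∀ y, w y ≤ C) (x : E) :
    Integrable (fun y => ‖x - y‖ ^ 2 * w y) μ :=
  (integrable_sq_norm_const_sub hμ x).mul_bdd hw.aestronglyMeasurable
    (ae_of_all _ fun y => (Real.norm_of_nonneg (hw0 y)).trans_le (hwC y))

end SecondMoment

variable {E : Type*} [NormedAddCommGroup E] [InnerProductSpace ℝ E] [CompleteSpace E]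
  [MeasurableSpace E] [BorelSpace E] [SecondCountableTopology E]

section FiniteMeasure

variable {μ : Measure E} [IsFiniteMeasure μ]

lemma integral_sq_norm_sub_eq (hμ : Integrable (fun y : E => ‖y‖ ^ 2) μ) (x : E) :
    ∫ y, ‖x - y‖ ^ 2 ∂μ = μ.real univ * ‖x - ⨍ y, y ∂μ‖ ^ 2 + ∫ y, ‖y - ⨍ z, z ∂μ‖ ^ 2 ∂μ := by
  set m := ⨍ y, y ∂μ
  have h_id : Integrable (fun y : E => y) μ :=
    (memLp_two_id_of_integrable_sq_norm hμ).integrable one_le_two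
  have h_centered : Integrable (fun y => y - m) μ := h_id.sub (integrable_const m)
  have h_mean : ∫ y, (y - m) ∂μ = 0 := by
    rw [integral_sub h_id (integrable_const m), integral_const, measure_smul_average, sub_self]
  have h_expand : ∀ y, ‖x - y‖ ^ 2 = ‖x - m‖ ^ 2 - 2 * inner ℝ (x - m) (y - m) + ‖y - m‖ ^ 2 := by
    intro y
    rw [← norm_sub_sq_real, sub_sub_sub_cancel_right]
  have h_cross : Integrable (fun y => 2 * inner ℝ (x - m) (y - m)) μ :=
    (h_centered.const_inner _).const_mul 2
  have h_first : Integrable (fun y => ‖x - m‖ ^ 2 - 2 * inner ℝ (x - m) (y - m)) μ :=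
    (integrable_const _).sub h_cross
  rw [integral_congr_ae (ae_of_all _ h_expand),
    integral_add h_first (integrable_sq_norm_sub_const hμ m),
    integral_sub (integrable_const _) h_cross, integral_const, integral_const_mul,
    integral_inner h_centered, h_mean, inner_zero_right, mul_zero, sub_zero, smul_eq_mul]

lemma measureReal_univ_mul_sq_norm_sub_average_le (hμ : Integrable (fun y : E => ‖y‖ ^ 2) μ)
    (x : E) : μ.real univ * ‖x - ⨍ y, y ∂μ‖ ^ 2 ≤ ∫ y, ‖x - y‖ ^ 2 ∂μ := by
  rw [integral_sq_norm_sub_eq hμ x]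
  exact le_add_of_nonneg_right (integral_nonneg fun _ => by positivity)

variable {w : E → ℝ} {C : ℝ}

lemma mul_sq_norm_sub_weighted_mean_le (hμ : Integrable (fun y : E => ‖y‖ ^ 2) μ)
    (hw : Measurable w) (hw0 : ∀ y, 0 ≤ w y) (hwC : ∀ y, w y ≤ C) (x : E) :
    (∫ y, w y ∂μ) * ‖x - (∫ y, w y ∂μ)⁻¹ • ∫ y, w y • y ∂μ‖ ^ 2 ≤
      ∫ y, ‖x - y‖ ^ 2 * w y ∂μ := by
  set ν := μ.withDensity fun y => ENNReal.ofReal (w y)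
  have hw_norm : ∀ y, ‖w y‖ ≤ C := fun y => (Real.norm_of_nonneg (hw0 y)).trans_le (hwC y)
  have : IsFiniteMeasure ν := isFiniteMeasure_withDensity_ofReal
    (Integrable.of_bound hw.aestronglyMeasurable C (ae_of_all _ hw_norm)).hasFiniteIntegral
  have hν : Integrable (fun y : E => ‖y‖ ^ 2) ν := (integrable_withDensity_ofReal_iff hw hw0).2
    (hμ.bdd_mul hw.aestronglyMeasurable (ae_of_all _ hw_norm))
  have h_mass : ν.real univ = ∫ y, w y ∂μ := by
    simpa using integral_withDensity_ofReal hw hw0 (μ := μ) fun _ => (1 : ℝ)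
  have h_mean : ⨍ y, y ∂ν = (∫ y, w y ∂μ)⁻¹ • ∫ y, w y • y ∂μ := by
    rw [average_eq, h_mass, integral_withDensity_ofReal hw hw0]
  have h_dist : ∫ y, ‖x - y‖ ^ 2 ∂ν = ∫ y, ‖x - y‖ ^ 2 * w y ∂μ := by
    rw [integral_withDensity_ofReal hw hw0]
    simp_rw [smul_eq_mul, mul_comm]
  have := measureReal_univ_mul_sq_norm_sub_average_le hν x
  rwa [h_mass, h_mean, h_dist] at this

end FiniteMeasure

section ProbabilityMeasure

variable {ρ : Measure E} [IsProbabilityMeasure ρ] {w : E → ℝ} {C : ℝ}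

lemma integral_sq_norm_sub_mul_le (hρ : Integrable (fun y : E => ‖y‖ ^ 2) ρ)
    (hw : Measurable w) (hw0 : ∀ y, 0 ≤ w y) (hwC : ∀ y, w y ≤ C) (x : E) :
    ∫ y, ‖x - y‖ ^ 2 * w y ∂ρ ≤
      C * (‖x - ∫ y, y ∂ρ‖ ^ 2 + ∫ y, ‖y - ∫ z, z ∂ρ‖ ^ 2 ∂ρ) := by
  calc ∫ y, ‖x - y‖ ^ 2 * w y ∂ρ ≤ ∫ y, C * ‖x - y‖ ^ 2 ∂ρ :=
        integral_mono (integrable_sq_norm_const_sub_mul hρ hw hw0 hwC x)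
          ((integrable_sq_norm_const_sub hρ x).const_mul C)
          fun y => by rw [mul_comm]; exact mul_le_mul_of_nonneg_right (hwC y) (sq_nonneg _)
    _ = C * (‖x - ∫ y, y ∂ρ‖ ^ 2 + ∫ y, ‖y - ∫ z, z ∂ρ‖ ^ 2 ∂ρ) := by
        rw [integral_const_mul, integral_sq_norm_sub_eq hρ x, probReal_univ, one_mul,
          average_eq_integral]

theorem weighted_variance_bound (hρ : Integrable (fun y : E => ‖y‖ ^ 2) ρ)
    (hw : Measurable w) (hw0 : ∀ y, 0 ≤ w y) (hwC : ∀ y, w y ≤ C) (hZ : 0 < ∫ y, w y ∂ρ) :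
    (∫ x, ‖x - (∫ y, w y ∂ρ)⁻¹ • ∫ y, w y • y ∂ρ‖ ^ 2 ∂ρ) ≤
      (∫ x, ∫ y, ‖x - y‖ ^ 2 * w y ∂ρ ∂ρ) / (∫ y, w y ∂ρ) ∧
    (∫ x, ∫ y, ‖x - y‖ ^ 2 * w y ∂ρ ∂ρ) / (∫ y, w y ∂ρ) ≤
      2 * C * (∫ x, ‖x - ∫ y, y ∂ρ‖ ^ 2 ∂ρ) / (∫ y, w y ∂ρ) := by
  set m := ∫ y, y ∂ρ
  set V := ∫ x, ‖x - m‖ ^ 2 ∂ρ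
  have h_bound_int : Integrable (fun x => C * (‖x - m‖ ^ 2 + V)) ρ :=
    ((integrable_sq_norm_sub_const hρ m).add (integrable_const V)).const_mul C
  have h_inner_nonneg : ∀ x, 0 ≤ ∫ y, ‖x - y‖ ^ 2 * w y ∂ρ :=
    fun x => integral_nonneg fun y => mul_nonneg (sq_nonneg _) (hw0 y)
  have h_inner_meas : StronglyMeasurable fun x => ∫ y, ‖x - y‖ ^ 2 * w y ∂ρ :=
    StronglyMeasurable.integral_prod_right' (f := fun p : E × E => ‖p.1 - p.2‖ ^ 2 * w p.2)
      (by fun_prop : Measurable fun p : E × E => ‖p.1 - p.2‖ ^ 2 * w p.2).stronglyMeasurable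
  have h_inner_int : Integrable (fun x => ∫ y, ‖x - y‖ ^ 2 * w y ∂ρ) ρ :=
    h_bound_int.mono' h_inner_meas.aestronglyMeasurable (ae_of_all _ fun x => by
      rw [Real.norm_of_nonneg (h_inner_nonneg x)]
      exact integral_sq_norm_sub_mul_le hρ hw hw0 hwC x)
  constructor
  · rw [le_div_iff₀ hZ, ← integral_mul_const]
    exact integral_mono_of_nonneg (ae_of_all _ fun _ => by positivity) h_inner_int
      (ae_of_all _ fun x => (mul_comm _ _).trans_le <|
        mul_sq_norm_sub_weighted_mean_le hρ hw hw0 hwC x)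
  · gcongr
    calc ∫ x, ∫ y, ‖x - y‖ ^ 2 * w y ∂ρ ∂ρ ≤ ∫ x, C * (‖x - m‖ ^ 2 + V) ∂ρ :=
          integral_mono h_inner_int h_bound_int (integral_sq_norm_sub_mul_le hρ hw hw0 hwC)
      _ = 2 * C * V := by
          rw [integral_const_mul,
            integral_add (integrable_sq_norm_sub_const hρ m) (integrable_const V), integral_const,
            probReal_univ, one_smul]
          ring

end ProbabilityMeasure

/-- Jensen-type estimate: the weighted variance around the regularized global best is
controlled by the variance of `ρ`:
`∫ |x − X^α(ρ)|² dρ ≤ (∫∫ |x−y|² e^{−αF(y)} dρ(y) dρ(x)) / ∫ e^{−αF} dρ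
  ≤ 2 e^{−α inf F} (∫ |x − m_ρ|² dρ) / ∫ e^{−αF} dρ`. -/
theorem Xalpha_variance_bound (d : ℕ) (F : EuclideanSpace ℝ (Fin d) → ℝ)
    (hFmeas : Measurable F) (hFbdd : BddBelow (Set.range F))
    (α : ℝ) (hα : 0 < α)
    (ρ : Measure (EuclideanSpace ℝ (Fin d))) [IsProbabilityMeasure ρ]
    (hmom : Integrable (fun x => ‖x‖ ^ 2) ρ) :
    (∫ x, ‖x - Xalpha α F ρ‖ ^ 2 ∂ρ) ≤
      (∫ x, ∫ y, ‖x - y‖ ^ 2 * Real.exp (-α * F y) ∂ρ ∂ρ) /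
        (∫ y, Real.exp (-α * F y) ∂ρ) ∧
    (∫ x, ∫ y, ‖x - y‖ ^ 2 * Real.exp (-α * F y) ∂ρ ∂ρ) /
        (∫ y, Real.exp (-α * F y) ∂ρ) ≤
      2 * Real.exp (-α * sInf (Set.range F)) *
        (∫ x, ‖x - ∫ y, y ∂ρ‖ ^ 2 ∂ρ) / (∫ y, Real.exp (-α * F y) ∂ρ) := by
  have hw_meas : Measurable fun y => Real.exp (-α * F y) := (hFmeas.const_mul _).exp
  have hw_le : ∀ y, Real.exp (-α * F y) ≤ Real.exp (-α * sInf (range F)) := fun y =>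
    Real.exp_le_exp.2 <| mul_le_mul_of_nonpos_left (csInf_le hFbdd (mem_range_self y))
      (neg_nonpos.2 hα.le)
  have hZ : 0 < ∫ y, Real.exp (-α * F y) ∂ρ := integral_exp_pos <|
    Integrable.of_bound hw_meas.aestronglyMeasurable _ <| ae_of_all _ fun y =>
      (Real.norm_of_nonneg (Real.exp_pos _).le).trans_le (hw_le y)
  exact weighted_variance_bound hmom hw_meas (fun _ => (Real.exp_pos _).le) hw_le hZ
end

section
/- Let F : ℝ^d → ℝ be twice continuously differentiable, bounded from below with F̲ := inf F > −∞, and with uniformly bounded Hessian: ‖∇²F(x)‖ ≤ c_F for all x ∈ ℝ^d (operator norm). Let α > 0 and let ρ be a Borel probability measure on ℝ^d with finite second moment. Then | ∫_{ℝ^d} e^{−αF(x)} ⟨∇F(x), x − X^α(ρ)⟩ ρ(dx) | ≤ c_F e^{−αF̲} ∫_{ℝ^d} |x − X^α(ρ)|² ρ(dx). -/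
/-!
Since `X^α(ρ)` is the `e^{-αF}`-weighted mean of `ρ`, the weighted integral of `x - X^α(ρ)`
vanishes, so `∇F(x)` may be replaced by `∇F(x) - ∇F(X^α(ρ))` in the integrand. The bound on the
Hessian makes `∇F` `c_F`-Lipschitz, and `e^{-αF} ≤ e^{-α inf F}`, which bounds the new integrand
pointwise by `c_F e^{-α inf F} |x - X^α(ρ)|²`.
-/

open MeasureTheory RealInnerProductSpace

section Gradient

variable {E : Type*} [NormedAddCommGroup E] [InnerProductSpace ℝ E] [CompleteSpace E]

theorem norm_gradient_sub_le_of_norm_iteratedFDeriv_two_le {F : E → ℝ} (hF : ContDiff ℝ 2 F)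
    {C : ℝ} (hC : ∀ x, ‖iteratedFDeriv ℝ 2 F x‖ ≤ C) (x y : E) :
    ‖gradient F x - gradient F y‖ ≤ C * ‖x - y‖ := by
  have hdiff : Differentiable ℝ (fderiv ℝ F) :=
    (hF.fderiv_right (m := 1) (by norm_num)).differentiable (by norm_num)
  have hbound (z : E) : ‖fderiv ℝ (fderiv ℝ F) z‖ ≤ C := by
    rw [← norm_iteratedFDeriv_one, norm_iteratedFDeriv_fderiv]
    exact hC z
  calc ‖gradient F x - gradient F y‖ = ‖fderiv ℝ F x - fderiv ℝ F y‖ := by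
        rw [gradient, gradient, ← map_sub, LinearIsometryEquiv.norm_map]
    _ ≤ C * ‖x - y‖ :=
        convex_univ.norm_image_sub_le_of_norm_fderiv_le (fun z _ => hdiff z)
          (fun z _ => hbound z) (Set.mem_univ y) (Set.mem_univ x)

end Gradient

section WeightedMean

variable {Ω E : Type*} [MeasurableSpace Ω] [NormedAddCommGroup E] [NormedSpace ℝ E]
  [CompleteSpace E]

noncomputable def weightedMean (μ : Measure Ω) (w : Ω → ℝ) (f : Ω → E) : E :=
  (∫ x, w x ∂μ)⁻¹ • ∫ x, w x • f x ∂μ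

theorem integral_smul_sub_weightedMean_eq_zero {μ : Measure Ω} {w : Ω → ℝ} {f : Ω → E}
    (hw : Integrable w μ) (hwf : Integrable (fun x => w x • f x) μ)
    (h0 : ∫ x, w x ∂μ ≠ 0) :
    ∫ x, w x • (f x - weightedMean μ w f) ∂μ = 0 := by
  simp_rw [smul_sub]
  rw [integral_sub hwf (hw.smul_const _), integral_smul_const, weightedMean, smul_smul,
    mul_inv_cancel₀ h0, one_smul, sub_self]

end WeightedMean

section Drift

variable {E : Type*} [NormedAddCommGroup E] [InnerProductSpace ℝ E] [CompleteSpace E]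
  [MeasurableSpace E] [OpensMeasurableSpace E]
  {μ : Measure E} {w : E → ℝ} {g : E → E} {X : E} {B C : ℝ}

theorem abs_integral_mul_inner_sub_le_of_integral_smul_sub_eq_zero
    (hw : AEStronglyMeasurable w μ) (hwB : ∀ x, |w x| ≤ B)
    (hg : ∀ x y, ‖g x - g y‖ ≤ C * ‖x - y‖)
    (hint : Integrable (fun x => w x • (x - X)) μ) (hbal : ∫ x, w x • (x - X) ∂μ = 0)
    (hsq : Integrable (fun x => ‖x - X‖ ^ 2) μ) :
    |∫ x, w x * ⟪g x, x - X⟫ ∂μ| ≤ C * B * ∫ x, ‖x - X‖ ^ 2 ∂μ := by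
  have hB : 0 ≤ B := (abs_nonneg _).trans (hwB X)
  have hg_cont : Continuous g :=
    (LipschitzWith.of_dist_le' (by simpa only [dist_eq_norm] using hg)).continuous
  set f : E → ℝ := fun x => w x * ⟪g x - g X, x - X⟫
  have hf_le (x : E) : |f x| ≤ C * B * ‖x - X‖ ^ 2 := by
    calc |f x| ≤ B * (‖g x - g X‖ * ‖x - X‖) := by
          rw [abs_mul]
          exact mul_le_mul (hwB x) (abs_real_inner_le_norm _ _) (abs_nonneg _) hB
      _ ≤ B * (C * ‖x - X‖ * ‖x - X‖) := by gcongr; exact hg x X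
      _ = C * B * ‖x - X‖ ^ 2 := by ring
  have hf_int : Integrable f μ := by
    refine (hsq.const_mul (C * B)).mono' ?_ (Filter.Eventually.of_forall hf_le)
    exact hw.mul ((hg_cont.sub continuous_const).inner
      (continuous_id.sub continuous_const)).aestronglyMeasurable
  have hψ_eq : (fun x => w x * ⟪g X, x - X⟫) = fun x => ⟪g X, w x • (x - X)⟫ := by
    simp_rw [real_inner_smul_right]
  have hψ_int : Integrable (fun x => w x * ⟪g X, x - X⟫) μ := by
    rw [hψ_eq]; exact hint.const_inner _
  have hψ_zero : ∫ x, w x * ⟪g X, x - X⟫ ∂μ = 0 := by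
    rw [hψ_eq, integral_inner hint, hbal, inner_zero_right]
  have hsplit : ∫ x, w x * ⟪g x, x - X⟫ ∂μ = ∫ x, f x ∂μ := by
    rw [← add_zero (∫ x, f x ∂μ), ← hψ_zero, ← integral_add hf_int hψ_int]
    congr 1; ext x; simp only [f, inner_sub_left]; ring
  calc |∫ x, w x * ⟪g x, x - X⟫ ∂μ| = |∫ x, f x ∂μ| := by rw [hsplit]
    _ ≤ ∫ x, |f x| ∂μ := abs_integral_le_integral_abs
    _ ≤ ∫ x, C * B * ‖x - X‖ ^ 2 ∂μ := integral_mono hf_int.abs (hsq.const_mul _) hf_le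
    _ = C * B * ∫ x, ‖x - X‖ ^ 2 ∂μ := integral_const_mul _ _

end Drift

/-- Drift estimate: if `F` is `C²`, bounded below, with uniformly bounded Hessian
`‖∇²F‖ ≤ c_F`, then
`|∫ e^{−αF(x)} ⟨∇F(x), x − X^α(ρ)⟩ dρ| ≤ c_F e^{−α inf F} ∫ |x − X^α(ρ)|² dρ`. -/
theorem drift_estimate (d : ℕ) (F : EuclideanSpace ℝ (Fin d) → ℝ)
    (hF : ContDiff ℝ 2 F) (hFbdd : BddBelow (Set.range F))
    (cF : ℝ) (hHess : ∀ x, ‖iteratedFDeriv ℝ 2 F x‖ ≤ cF)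
    (α : ℝ) (hα : 0 < α)
    (ρ : Measure (EuclideanSpace ℝ (Fin d))) [IsProbabilityMeasure ρ]
    (hmom : Integrable (fun x => ‖x‖ ^ 2) ρ) :
    |∫ x, Real.exp (-α * F x) * ⟪gradient F x, x - Xalpha α F ρ⟫ ∂ρ| ≤
      cF * Real.exp (-α * sInf (Set.range F)) * ∫ x, ‖x - Xalpha α F ρ‖ ^ 2 ∂ρ := by
  set w := fun x => Real.exp (-α * F x)
  have hw_meas : AEStronglyMeasurable w ρ :=
    (Real.continuous_exp.comp (continuous_const.mul hF.continuous)).aestronglyMeasurable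
  have hwB (x) : |w x| ≤ Real.exp (-α * sInf (Set.range F)) := by
    rw [abs_of_pos (Real.exp_pos _), Real.exp_le_exp, neg_mul, neg_mul, neg_le_neg_iff]
    exact mul_le_mul_of_nonneg_left (csInf_le hFbdd (Set.mem_range_self x)) hα.le
  have hwB' : ∀ᵐ x ∂ρ, ‖w x‖ ≤ Real.exp (-α * sInf (Set.range F)) :=
    Filter.Eventually.of_forall hwB
  have hL2 : MemLp id 2 ρ :=
    (memLp_two_iff_integrable_sq_norm aestronglyMeasurable_id).2 hmom
  have hw_int : Integrable w ρ := (integrable_const _).mono' hw_meas hwB'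
  have hwx_int : Integrable (fun x => w x • x) ρ :=
    (hL2.integrable one_le_two).bdd_smul _ hw_meas hwB'
  have hint : Integrable (fun x => w x • (x - Xalpha α F ρ)) ρ :=
    ((hL2.integrable one_le_two).sub (integrable_const _)).bdd_smul _ hw_meas hwB'
  have hsq : Integrable (fun x => ‖x - Xalpha α F ρ‖ ^ 2) ρ :=
    (memLp_two_iff_integrable_sq_norm (by fun_prop)).1 (hL2.sub (memLp_const _))
  have hbal : ∫ x, w x • (x - Xalpha α F ρ) ∂ρ = 0 :=
    integral_smul_sub_weightedMean_eq_zero (f := id) hw_int hwx_int (integral_exp_pos hw_int).ne'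
  exact abs_integral_mul_inner_sub_le_of_integral_smul_sub_eq_zero hw_meas hwB
    (norm_gradient_sub_le_of_norm_iteratedFDeriv_two_le hF hHess) hint hbal hsq
end
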